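/- Let η, τ ∈ ℝ and let ξ′ = (ξ₁,ξ₂) ∈ ℝ² with ξ′ ≠ 0. Define a₊ = (1/2)Γ − i·α₃ and a₋ = (1/2)Γ + i·α₃ where Γ = η·I₄ + τ·α₀ (so Γ = diag((η+τ)·I₂, (η−τ)·I₂)), and set 𝔢₁ = a₊·h₋,₁(ξ′), 𝔢₂ = a₊·h₋,₂(ξ′), 𝔢₃ = a₋·h₊,₁(ξ′), 𝔢₄ = a₋·h₊,₂(ξ′). Then the family (𝔢₁, 𝔢₂, 𝔢₃, 𝔢₄) is linearly independent in ℂ⁴ if and only if η² − τ² ≠ 4. -/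

import Mathlib

open Matrix Complex

noncomputable section

/-- Pauli matrices -/
def σ1 : Matrix (Fin 2) (Fin 2) ℂ := !![0, 1; 1, 0]
def σ2 : Matrix (Fin 2) (Fin 2) ℂ := !![0, -I; I, 0]
def σ3 : Matrix (Fin 2) (Fin 2) ℂ := !![1, 0; 0, -1]

/-- Dirac matrices `α₀`, `α₃`, as 4×4 block matrices indexed by `Fin 2 ⊕ Fin 2`. -/
def α0 : Matrix (Fin 2 ⊕ Fin 2) (Fin 2 ⊕ Fin 2) ℂ := Matrix.fromBlocks 1 0 0 (-1)
def α3 : Matrix (Fin 2 ⊕ Fin 2) (Fin 2 ⊕ Fin 2) ℂ := Matrix.fromBlocks 0 σ3 σ3 0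

/-- `Λ₊(ξ′) = ξ₁σ₁ + ξ₂σ₂ + i|ξ′|σ₃`. -/
def Λp (ξ₁ ξ₂ : ℝ) : Matrix (Fin 2) (Fin 2) ℂ :=
  (ξ₁ : ℂ) • σ1 + (ξ₂ : ℂ) • σ2 + (I * (Real.sqrt (ξ₁ ^ 2 + ξ₂ ^ 2) : ℝ)) • σ3

/-- `Λ₋(ξ′) = ξ₁σ₁ + ξ₂σ₂ − i|ξ′|σ₃`. -/
def Λm (ξ₁ ξ₂ : ℝ) : Matrix (Fin 2) (Fin 2) ℂ :=
  (ξ₁ : ℂ) • σ1 + (ξ₂ : ℂ) • σ2 - (I * (Real.sqrt (ξ₁ ^ 2 + ξ₂ ^ 2) : ℝ)) • σ3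

/-- `e = (1,0) ∈ ℂ²`. -/
def e : Fin 2 → ℂ := ![1, 0]

/-- `h₊,₁, h₊,₂, h₋,₁, h₋,₂ ∈ ℂ⁴`. -/
def hp1 (ξ₁ ξ₂ : ℝ) : (Fin 2 ⊕ Fin 2) → ℂ := Sum.elim ((Λp ξ₁ ξ₂).mulVec e) 0
def hp2 (ξ₁ ξ₂ : ℝ) : (Fin 2 ⊕ Fin 2) → ℂ := Sum.elim 0 ((Λp ξ₁ ξ₂).mulVec e)
def hm1 (ξ₁ ξ₂ : ℝ) : (Fin 2 ⊕ Fin 2) → ℂ := Sum.elim ((Λm ξ₁ ξ₂).mulVec e) 0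
def hm2 (ξ₁ ξ₂ : ℝ) : (Fin 2 ⊕ Fin 2) → ℂ := Sum.elim 0 ((Λm ξ₁ ξ₂).mulVec e)

/-- Interaction matrix of the electrostatic and Lorentz scalar δ-shell:
`Γ = η·I₄ + τ·α₀`. -/
def ΓEL (η τ : ℝ) : Matrix (Fin 2 ⊕ Fin 2) (Fin 2 ⊕ Fin 2) ℂ :=
  (η : ℂ) • 1 + (τ : ℂ) • α0

/-- `a₊ = (1/2)Γ − i·α₃`. -/
def aP (η τ : ℝ) : Matrix (Fin 2 ⊕ Fin 2) (Fin 2 ⊕ Fin 2) ℂ :=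
  (1 / 2 : ℂ) • ΓEL η τ - I • α3

/-- `a₋ = (1/2)Γ + i·α₃`. -/
def aM (η τ : ℝ) : Matrix (Fin 2 ⊕ Fin 2) (Fin 2 ⊕ Fin 2) ℂ :=
  (1 / 2 : ℂ) • ΓEL η τ + I • α3

/-!
Write `u = Λ₋(ξ′)e`, `w = Λ₊(ξ′)e`, `a = (η + τ)/2`, `b = (η − τ)/2`. Since `σ₃u = −w` and
`σ₃w = −u`, the four vectors are `𝔢₁ = (au, iw)`, `𝔢₂ = (iw, bu)`, `𝔢₃ = (aw, −iu)`,
`𝔢₄ = (−iu, bw)`: their coordinates in the frame `(u,0), (w,0), (0,u), (0,w)` form a matrix which,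
after swapping the second vectors of the two blocks, is block diagonal with determinants `ab − 1`
and `1 − ab`. The frame is a basis because `det (u; w) = −2i|ξ′|(ξ₁ + iξ₂) ≠ 0` for `ξ′ ≠ 0`, so the
family is independent iff `ab ≠ 1`, i.e. `η² − τ² ≠ 4`.
-/

lemma Λm_mulVec_e (ξ₁ ξ₂ : ℝ) :
    Λm ξ₁ ξ₂ *ᵥ e = ![-(I * (√(ξ₁ ^ 2 + ξ₂ ^ 2) : ℝ)), ξ₁ + I * ξ₂] := by
  ext i
  fin_cases i <;> simp [Λm, σ1, σ2, σ3, e, mulVec, dotProduct, Fin.sum_univ_two]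
  ring

lemma Λp_mulVec_e (ξ₁ ξ₂ : ℝ) :
    Λp ξ₁ ξ₂ *ᵥ e = ![I * (√(ξ₁ ^ 2 + ξ₂ ^ 2) : ℝ), ξ₁ + I * ξ₂] := by
  ext i
  fin_cases i <;> simp [Λp, σ1, σ2, σ3, e, mulVec, dotProduct, Fin.sum_univ_two]
  ring

lemma σ3_mulVec_Λm_e (ξ₁ ξ₂ : ℝ) : σ3 *ᵥ (Λm ξ₁ ξ₂ *ᵥ e) = -(Λp ξ₁ ξ₂ *ᵥ e) := by
  rw [Λm_mulVec_e, Λp_mulVec_e]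
  ext i
  fin_cases i <;> simp [σ3, mulVec, dotProduct, Fin.sum_univ_two]

lemma σ3_mulVec_Λp_e (ξ₁ ξ₂ : ℝ) : σ3 *ᵥ (Λp ξ₁ ξ₂ *ᵥ e) = -(Λm ξ₁ ξ₂ *ᵥ e) := by
  rw [Λm_mulVec_e, Λp_mulVec_e]
  ext i
  fin_cases i <;> simp [σ3, mulVec, dotProduct, Fin.sum_univ_two]

def ΛeMatrix (ξ₁ ξ₂ : ℝ) : Matrix (Fin 2) (Fin 2) ℂ := of ![Λm ξ₁ ξ₂ *ᵥ e, Λp ξ₁ ξ₂ *ᵥ e]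

lemma det_ΛeMatrix (ξ₁ ξ₂ : ℝ) :
    (ΛeMatrix ξ₁ ξ₂).det = -2 * I * (√(ξ₁ ^ 2 + ξ₂ ^ 2) : ℝ) * (ξ₁ + I * ξ₂) := by
  rw [ΛeMatrix, det_fin_two, Λm_mulVec_e, Λp_mulVec_e]
  simp only [of_apply, cons_val_zero, cons_val_one]
  ring

lemma det_ΛeMatrix_ne_zero {ξ₁ ξ₂ : ℝ} (hξ : ¬(ξ₁ = 0 ∧ ξ₂ = 0)) :
    (ΛeMatrix ξ₁ ξ₂).det ≠ 0 := by
  have hr : √(ξ₁ ^ 2 + ξ₂ ^ 2) ≠ 0 := by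
    rw [Real.sqrt_ne_zero']
    rcases not_and_or.mp hξ with h | h <;> positivity
  have hz : (ξ₁ + I * ξ₂ : ℂ) ≠ 0 := by
    contrapose! hξ
    simpa [Complex.ext_iff] using hξ
  rw [det_ΛeMatrix]
  simp [hr, hz, I_ne_zero]

lemma ΓEL_eq_fromBlocks (η τ : ℝ) :
    ΓEL η τ = fromBlocks ((η + τ : ℂ) • 1) 0 0 ((η - τ : ℂ) • 1) := by
  simp only [ΓEL, α0, ← fromBlocks_one, fromBlocks_smul, fromBlocks_add]
  congr 1 <;> simp [add_smul, sub_eq_add_neg]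

lemma aP_eq_fromBlocks (η τ : ℝ) :
    aP η τ =
      fromBlocks (((η + τ) / 2 : ℂ) • 1) (-I • σ3) (-I • σ3) (((η - τ) / 2 : ℂ) • 1) := by
  simp only [aP, ΓEL_eq_fromBlocks, α3, fromBlocks_smul, sub_eq_add_neg, fromBlocks_neg,
    fromBlocks_add]
  congr 1 <;> simp [smul_smul, div_eq_inv_mul]

lemma aM_eq_fromBlocks (η τ : ℝ) :
    aM η τ =
      fromBlocks (((η + τ) / 2 : ℂ) • 1) (I • σ3) (I • σ3) (((η - τ) / 2 : ℂ) • 1) := by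
  simp only [aM, ΓEL_eq_fromBlocks, α3, fromBlocks_smul, fromBlocks_add]
  congr 1 <;> simp [smul_smul, div_eq_inv_mul]

section
variable (η τ ξ₁ ξ₂ : ℝ)

lemma aP_mulVec_hm1 :
    aP η τ *ᵥ hm1 ξ₁ ξ₂ =
      Sum.elim (((η + τ) / 2 : ℂ) • Λm ξ₁ ξ₂ *ᵥ e) (I • Λp ξ₁ ξ₂ *ᵥ e) := by
  simp only [aP_eq_fromBlocks, hm1, fromBlocks_mulVec, Sum.elim_comp_inl, Sum.elim_comp_inr,
    mulVec_zero, smul_mulVec, one_mulVec, neg_mulVec, σ3_mulVec_Λm_e, add_zero, smul_neg,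
    neg_smul, neg_neg]

lemma aP_mulVec_hm2 :
    aP η τ *ᵥ hm2 ξ₁ ξ₂ =
      Sum.elim (I • Λp ξ₁ ξ₂ *ᵥ e) (((η - τ) / 2 : ℂ) • Λm ξ₁ ξ₂ *ᵥ e) := by
  simp only [aP_eq_fromBlocks, hm2, fromBlocks_mulVec, Sum.elim_comp_inl, Sum.elim_comp_inr,
    mulVec_zero, smul_mulVec, one_mulVec, neg_mulVec, σ3_mulVec_Λm_e, zero_add, smul_neg,
    neg_smul, neg_neg]

lemma aM_mulVec_hp1 :
    aM η τ *ᵥ hp1 ξ₁ ξ₂ =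
      Sum.elim (((η + τ) / 2 : ℂ) • Λp ξ₁ ξ₂ *ᵥ e) (-I • Λm ξ₁ ξ₂ *ᵥ e) := by
  simp only [aM_eq_fromBlocks, hp1, fromBlocks_mulVec, Sum.elim_comp_inl, Sum.elim_comp_inr,
    mulVec_zero, smul_mulVec, one_mulVec, σ3_mulVec_Λp_e, add_zero, smul_neg, neg_smul]

lemma aM_mulVec_hp2 :
    aM η τ *ᵥ hp2 ξ₁ ξ₂ =
      Sum.elim (-I • Λm ξ₁ ξ₂ *ᵥ e) (((η - τ) / 2 : ℂ) • Λp ξ₁ ξ₂ *ᵥ e) := by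
  simp only [aM_eq_fromBlocks, hp2, fromBlocks_mulVec, Sum.elim_comp_inl, Sum.elim_comp_inr,
    mulVec_zero, smul_mulVec, one_mulVec, σ3_mulVec_Λp_e, zero_add, smul_neg, neg_smul]

end

lemma mul_fromBlocks_diag_self_apply {l n R : Type*} [CommSemiring R]
    (C : Matrix l (Fin 2 ⊕ Fin 2) R) (W : Matrix (Fin 2) n R) (k : l) :
    (C * fromBlocks W 0 0 W) k =
      Sum.elim (C k (.inl 0) • W 0 + C k (.inl 1) • W 1)
        (C k (.inr 0) • W 0 + C k (.inr 1) • W 1) := by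
  ext (j | j) <;> simp [mul_apply, Fintype.sum_sum_type, Fin.sum_univ_two]

def coeffMatrix (a b : ℂ) : Matrix (Fin 2 ⊕ Fin 2) (Fin 2 ⊕ Fin 2) ℂ :=
  fromBlocks !![a, 0; 0, I] !![0, I; b, 0] !![0, a; -I, 0] !![-I, 0; 0, b]

lemma det_coeffMatrix (a b : ℂ) : (coeffMatrix a b).det = -(1 - a * b) ^ 2 := by
  let σ := Equiv.swap (Sum.inl 1 : Fin 2 ⊕ Fin 2) (Sum.inr 1)
  have hσ : (coeffMatrix a b).submatrix σ σ =
      fromBlocks !![a, I; -I, b] 0 0 !![-I, a; b, I] := by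
    ext (i | i) (j | j) <;> fin_cases i <;> fin_cases j <;>
      simp [σ, coeffMatrix, Equiv.swap_apply_of_ne_of_ne]
  rw [← det_submatrix_equiv_self σ, hσ, det_fromBlocks_zero₂₁, det_fin_two_of, det_fin_two_of]
  linear_combination (1 - 2 * a * b - I ^ 2) * I_sq

lemma family_comp_finSumFinEquiv (η τ ξ₁ ξ₂ : ℝ) :
    ![aP η τ *ᵥ hm1 ξ₁ ξ₂, aP η τ *ᵥ hm2 ξ₁ ξ₂, aM η τ *ᵥ hp1 ξ₁ ξ₂, aM η τ *ᵥ hp2 ξ₁ ξ₂] ∘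
        finSumFinEquiv =
      (coeffMatrix ((η + τ) / 2) ((η - τ) / 2) *
        fromBlocks (ΛeMatrix ξ₁ ξ₂) 0 0 (ΛeMatrix ξ₁ ξ₂)).row := by
  rw [aP_mulVec_hm1, aP_mulVec_hm2, aM_mulVec_hp1, aM_mulVec_hp2]
  funext k
  rw [Function.comp_apply, row, mul_fromBlocks_diag_self_apply, ΛeMatrix]
  generalize Λm ξ₁ ξ₂ *ᵥ e = u
  generalize Λp ξ₁ ξ₂ *ᵥ e = w
  rcases k with (k | k) <;> fin_cases k <;> simp [coeffMatrix] <;> rfl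

/-- Lopatinsky–Shapiro condition for electrostatic + Lorentz scalar shell:
for `ξ′ ≠ 0`, `(𝔢₁, 𝔢₂, 𝔢₃, 𝔢₄)` is linearly independent in `ℂ⁴` iff `η² − τ² ≠ 4`. -/
theorem lopatinsky_shapiro_electrostatic_lorentz (η τ ξ₁ ξ₂ : ℝ)
    (hξ : ¬(ξ₁ = 0 ∧ ξ₂ = 0)) :
    LinearIndependent ℂ
        ![(aP η τ).mulVec (hm1 ξ₁ ξ₂), (aP η τ).mulVec (hm2 ξ₁ ξ₂),
          (aM η τ).mulVec (hp1 ξ₁ ξ₂), (aM η τ).mulVec (hp2 ξ₁ ξ₂)]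
      ↔ η ^ 2 - τ ^ 2 ≠ 4 := by
  have hframe : (ΛeMatrix ξ₁ ξ₂).det * (ΛeMatrix ξ₁ ξ₂).det ≠ 0 :=
    mul_ne_zero (det_ΛeMatrix_ne_zero hξ) (det_ΛeMatrix_ne_zero hξ)
  have hab : ((η + τ) / 2 * ((η - τ) / 2) : ℂ) = ((η ^ 2 - τ ^ 2) / 4 : ℝ) := by
    push_cast
    ring
  rw [← linearIndependent_equiv (finSumFinEquiv : Fin 2 ⊕ Fin 2 ≃ Fin 4),
    family_comp_finSumFinEquiv, linearIndependent_rows_iff_isUnit, isUnit_iff_isUnit_det,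
    isUnit_iff_ne_zero, det_mul, det_fromBlocks_zero₂₁, det_coeffMatrix, mul_ne_zero_iff,
    and_iff_left hframe, neg_ne_zero, pow_ne_zero_iff two_ne_zero, sub_ne_zero, hab,
    ← ofReal_one, Ne, ofReal_inj, eq_div_iff four_ne_zero, one_mul, eq_comm]
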